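/- For any subcubic planar graph G, the clique number of the exact square of G is at most 4; that is, ω^{[#2]}(G) ≤ 4. -/

import Mathlib

/-!
A clique of the exact square is an independent set of `G` in which any two vertices have a
common neighbour. Take five such vertices. If no vertex of `G` is adjacent to three of them,
attach every vertex adjacent to the clique to one of its clique neighbours: the resulting stars
are disjoint and connected, and the common neighbour of two clique vertices, adjacent to no
third one, joins their stars, so `G` has a `K₅` minor.

Otherwise some `z` is adjacent to three of them, `x₁, x₂, x₃`, and has no other neighbour. Let
`y₁, y₂` be the remaining two. Take the star of `xᵢ` over the common neighbours of `xᵢ, y₁, y₂`,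
the star of `yⱼ` over its neighbours not adjacent to the other `y`, and `{z}`. Degree at most
three makes these disjoint, and a common neighbour of `xᵢ` and `yⱼ` lies in one of the two
stars, so they form a `K₃,₃` minor. Either way Wagner's criterion is violated.
-/

/-- The exact square of a graph `G`: two distinct vertices are adjacent iff
their distance in `G` is exactly `2`. -/
def exactSquare {V : Type*} (G : SimpleGraph V) : SimpleGraph V where
  Adj u v := G.dist u v = 2
  symm := ⟨fun _ _ h => SimpleGraph.dist_comm.trans h⟩
  loopless := ⟨fun v h => by simp [SimpleGraph.dist_self] at h⟩

/-- `G` has `H` as a minor: there is a family of nonempty, pairwise disjoint,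
connected branch sets in `G`, one for each vertex of `H`, such that every edge
of `H` is realized by an edge of `G` between the corresponding branch sets. -/
def HasMinor {V W : Type*} (G : SimpleGraph V) (H : SimpleGraph W) : Prop :=
  ∃ B : W → Set V,
    (∀ w, (B w).Nonempty) ∧
    (∀ w, (G.induce (B w)).Connected) ∧
    (Pairwise fun w w' => Disjoint (B w) (B w')) ∧
    ∀ ⦃w w'⦄, H.Adj w w' → ∃ u ∈ B w, ∃ v ∈ B w', G.Adj u v

/-- Planarity, via Wagner's theorem: a graph is planar iff it has neither a
`K₅` minor nor a `K₃,₃` minor. -/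
def IsPlanar {V : Type*} (G : SimpleGraph V) : Prop :=
  ¬ HasMinor G (SimpleGraph.completeGraph (Fin 5)) ∧
    ¬ HasMinor G (completeBipartiteGraph (Fin 3) (Fin 3))

open SimpleGraph Function

section

variable {V W : Type*} {G : SimpleGraph V}

theorem exactSquare_adj_iff {u v : V} :
    (exactSquare G).Adj u v ↔ u ≠ v ∧ ¬ G.Adj u v ∧ (G.commonNeighbors u v).Nonempty := by
  rw [← edist_eq_two_iff]
  change G.dist u v = 2 ↔ _
  refine ⟨fun h => ?_, fun h => by simp [SimpleGraph.dist, h]⟩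
  rw [← (Reachable.of_dist_ne_zero (by omega)).coe_dist_eq_edist, h]
  rfl

theorem not_adj_of_copy_exactSquare (f : Copy (completeGraph W) (exactSquare G)) (i j : W) :
    ¬ G.Adj (f i) (f j) := by
  rcases eq_or_ne i j with rfl | hij
  · exact G.irrefl
  · exact (exactSquare_adj_iff.mp (f.toHom.map_adj hij)).2.1

theorem exists_adj_adj_of_copy_exactSquare (f : Copy (completeGraph W) (exactSquare G)) {i j : W}
    (hij : i ≠ j) : ∃ m, G.Adj (f i) m ∧ G.Adj (f j) m :=
  (exactSquare_adj_iff.mp (f.toHom.map_adj hij)).2.2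

theorem card_le_ncard_neighborSet [Finite V] {f : W → V} (hf : Injective f) {t : V}
    {I : Finset W} (hI : ∀ i ∈ I, G.Adj (f i) t) : I.card ≤ (G.neighborSet t).ncard := by
  rw [← Set.ncard_coe_finset, ← Set.ncard_image_of_injective _ hf]
  exact Set.ncard_le_ncard (by rintro _ ⟨i, hi, rfl⟩; exact (hI i hi).symm)

theorem connected_induce_insert_of_forall_adj {c : V} {s : Set V} (h : ∀ x ∈ s, G.Adj c x) :
    (G.induce (insert c s)).Connected := by
  have hc : c ∈ insert c s := Set.mem_insert c s
  have reach : ∀ x : (insert c s : Set V), (G.induce (insert c s)).Reachable x ⟨c, hc⟩ := by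
    rintro ⟨x, rfl | hx⟩
    · rfl
    · exact Adj.reachable (h x hx).symm
  exact (connected_iff _).mpr ⟨fun x y => (reach x).trans (reach y).symm, ⟨⟨c, hc⟩⟩⟩

theorem hasMinor_of_stars {H : SimpleGraph W} (c : W → V) (L : W → Set V)
    (hL : ∀ i, ∀ t ∈ L i, G.Adj (c i) t) (hc : Injective c) (hcL : ∀ i j, c i ∉ L j)
    (hLL : Pairwise (Disjoint on L))
    (hH : ∀ ⦃i j⦄, H.Adj i j → ∃ x ∈ insert (c i) (L i), ∃ y ∈ insert (c j) (L j), G.Adj x y) :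
    HasMinor G H := by
  refine ⟨fun i => insert (c i) (L i), fun i => Set.insert_nonempty _ _,
    fun i => connected_induce_insert_of_forall_adj (hL i), fun i j hij => ?_, hH⟩
  change Disjoint (insert (c i) (L i)) (insert (c j) (L j))
  rw [Set.disjoint_insert_left, Set.disjoint_insert_right, Set.mem_insert_iff, not_or]
  exact ⟨⟨hc.ne hij, hcL i j⟩, hcL j i, hLL hij⟩

theorem hasMinor_completeGraph_of_copy_exactSquare (f : Copy (completeGraph W) (exactSquare G))
    (h3 : ∀ t i j k, G.Adj (f i) t → G.Adj (f j) t → G.Adj (f k) t → i = j ∨ i = k ∨ j = k) :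
    HasMinor G (completeGraph W) := by
  rcases isEmpty_or_nonempty W with hW | ⟨⟨w₀⟩⟩
  · exact ⟨isEmptyElim, isEmptyElim, isEmptyElim, fun i => isEmptyElim i, fun i => isEmptyElim i⟩
  classical
  let σ : V → W := fun t => if h : ∃ k, G.Adj (f k) t then h.choose else w₀
  have hσ : ∀ t k, G.Adj (f k) t → G.Adj (f (σ t)) t := fun t k h => by
    have hk : ∃ k, G.Adj (f k) t := ⟨k, h⟩
    simp only [σ, dif_pos hk]
    exact hk.choose_spec
  refine hasMinor_of_stars f (fun i => {t | G.Adj (f i) t ∧ σ t = i}) (fun i t ht => ht.1)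
    f.injective (fun i j h => not_adj_of_copy_exactSquare f j i h.1)
    (fun i j hij => Set.disjoint_left.mpr fun t hi hj => hij (hi.2.symm.trans hj.2)) ?_
  intro i j hij
  obtain ⟨m, hmi, hmj⟩ := exists_adj_adj_of_copy_exactSquare f hij
  rcases h3 m i j (σ m) hmi hmj (hσ m i hmi) with h | h | h
  · exact absurd h hij
  · exact ⟨m, Or.inr ⟨hmi, h.symm⟩, f j, Or.inl rfl, hmj.symm⟩
  · exact ⟨f i, Or.inl rfl, m, Or.inr ⟨hmj, h.symm⟩, hmi⟩

theorem exists_sumEquiv_inl_mem {α : Type*} [Fintype α] {m n : ℕ} (hα : Fintype.card α = m + n)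
    {T : Finset α} (hT : m ≤ T.card) : ∃ e : Fin m ⊕ Fin n ≃ α, ∀ x, e (.inl x) ∈ T := by
  classical
  obtain ⟨T', hT'T, hT'⟩ := Finset.exists_subset_card_eq hT
  have hc : Fintype.card {a // a ∉ T'} = n := by
    rw [Fintype.card_subtype_compl, Fintype.card_coe, hT', hα, Nat.add_sub_cancel_left]
  exact ⟨((T'.equivFinOfCardEq hT').sumCongr (Fintype.equivFinOfCardEq hc)).symm.trans
    (Equiv.sumCompl (· ∈ T')), fun x => hT'T (by simp)⟩

section K33

variable (f : Copy (completeGraph (Fin 3 ⊕ Fin 2)) (exactSquare G)) (z : V)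

/- The `xᵢ` are the `f (.inl _)`, the `yⱼ` the `f (.inr _)`; the second side of `K₃,₃` is
`z, y₁, y₂`. -/
def k33Center : Fin 3 ⊕ Fin 3 → V :=
  Sum.elim (f ∘ .inl) (Fin.cons z (f ∘ .inr))

def k33Leaves : Fin 3 ⊕ Fin 3 → Set V :=
  Sum.elim (fun x => {t | G.Adj (f (.inl x)) t ∧ ∀ y, G.Adj (f (.inr y)) t})
    (Fin.cons ∅ fun y => {t | G.Adj (f (.inr y)) t ∧ ¬ ∀ y', G.Adj (f (.inr y')) t})

variable {f z}

theorem not_adj_inr_of_forall_adj_inl [Finite V] (hdeg : ∀ v, (G.neighborSet v).ncard ≤ 3)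
    (hz : ∀ x, G.Adj (f (.inl x)) z) (y : Fin 2) : ¬ G.Adj (f (.inr y)) z := fun h => by
  have h4 : ∀ y : Fin 2, ({.inl 0, .inl 1, .inl 2, .inr y} : Finset (Fin 3 ⊕ Fin 2)).card = 4 := by
    decide
  have := (card_le_ncard_neighborSet f.injective (I := {.inl 0, .inl 1, .inl 2, .inr y})
    (by simp [hz, h])).trans (hdeg z)
  have := h4 y
  omega

theorem not_forall_adj_inr_of_adj_inl [Finite V] (hdeg : ∀ v, (G.neighborSet v).ncard ≤ 3)
    {t : V} {x x' : Fin 3} (hne : x ≠ x') (hx : G.Adj (f (.inl x)) t)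
    (hx' : G.Adj (f (.inl x')) t) : ¬ ∀ y, G.Adj (f (.inr y)) t := fun hy => by
  have h4 : ∀ x x' : Fin 3, x ≠ x' →
      ({.inl x, .inl x', .inr 0, .inr 1} : Finset (Fin 3 ⊕ Fin 2)).card = 4 := by
    decide
  have := (card_le_ncard_neighborSet f.injective (I := {.inl x, .inl x', .inr 0, .inr 1})
    (by simp [hx, hx', hy])).trans (hdeg t)
  have := h4 x x' hne
  omega

theorem adj_k33Center_of_mem_k33Leaves {i : Fin 3 ⊕ Fin 3} {t : V} (ht : t ∈ k33Leaves f i) :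
    G.Adj (k33Center f z i) t := by
  rcases i with x | w
  · exact ht.1
  · induction w using Fin.cases with
    | zero => exact ht.elim
    | succ y => exact ht.1

theorem exists_adj_inr_of_mem_k33Leaves {i : Fin 3 ⊕ Fin 3} {t : V} (ht : t ∈ k33Leaves f i) :
    ∃ y, G.Adj (f (.inr y)) t := by
  rcases i with x | w
  · exact ⟨0, ht.2 0⟩
  · induction w using Fin.cases with
    | zero => exact ht.elim
    | succ y => exact ⟨y, ht.1⟩

theorem k33Center_eq_or_exists (i : Fin 3 ⊕ Fin 3) :
    k33Center f z i = z ∨ ∃ k, k33Center f z i = f k := by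
  rcases i with x | w
  · exact .inr ⟨.inl x, rfl⟩
  · induction w using Fin.cases with
    | zero => exact .inl rfl
    | succ y => exact .inr ⟨.inr y, rfl⟩

theorem injective_k33Center (hz : ∀ x, G.Adj (f (.inl x)) z) : Injective (k33Center f z) := by
  have hfz : ∀ k, f k ≠ z := fun k h => not_adj_of_copy_exactSquare f (.inl 0) k (h ▸ hz 0)
  refine (f.injective.comp Sum.inl_injective).sumElim
    (Fin.cons_injective_iff.mpr ⟨?_, f.injective.comp Sum.inr_injective⟩) fun x w => ?_
  · rintro ⟨y, hy⟩
    exact hfz _ hy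
  · induction w using Fin.cases with
    | zero => exact hfz _
    | succ y => exact f.injective.ne Sum.inl_ne_inr

theorem k33Center_notMem_k33Leaves [Finite V] (hdeg : ∀ v, (G.neighborSet v).ncard ≤ 3)
    (hz : ∀ x, G.Adj (f (.inl x)) z) (i j : Fin 3 ⊕ Fin 3) :
    k33Center f z i ∉ k33Leaves f j := fun hi => by
  obtain ⟨y, hy⟩ := exists_adj_inr_of_mem_k33Leaves hi
  rcases k33Center_eq_or_exists i with h | ⟨k, h⟩ <;> rw [h] at hy
  · exact not_adj_inr_of_forall_adj_inl hdeg hz y hy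
  · exact not_adj_of_copy_exactSquare f _ _ hy

theorem pairwise_disjoint_k33Leaves [Finite V] (hdeg : ∀ v, (G.neighborSet v).ncard ≤ 3) :
    Pairwise (Disjoint on k33Leaves f) := by
  rintro (x | w) (x' | w') hne <;> rw [Function.onFun, Set.disjoint_left] <;> intro t ht ht'
  · exact not_forall_adj_inr_of_adj_inl hdeg (by simpa using hne) ht.1 ht'.1 ht.2
  · induction w' using Fin.cases with
    | zero => exact ht'.elim
    | succ y => exact ht'.2 ht.2
  · induction w using Fin.cases with
    | zero => exact ht.elim
    | succ y => exact ht.2 ht'.2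
  · induction w using Fin.cases with
    | zero => exact ht.elim
    | succ y =>
      induction w' using Fin.cases with
      | zero => exact ht'.elim
      | succ y' =>
        have two : ∀ y y' y'' : Fin 2, y ≠ y' → y'' = y ∨ y'' = y' := by decide
        exact ht.2 fun y'' => (two y y' y'' (by simpa using hne)).elim (· ▸ ht.1) (· ▸ ht'.1)

theorem exists_adj_of_completeBipartiteGraph_adj (hz : ∀ x, G.Adj (f (.inl x)) z)
    {i j : Fin 3 ⊕ Fin 3} (hij : (completeBipartiteGraph (Fin 3) (Fin 3)).Adj i j) :
    ∃ a ∈ insert (k33Center f z i) (k33Leaves f i),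
      ∃ b ∈ insert (k33Center f z j) (k33Leaves f j), G.Adj a b := by
  have edge : ∀ x w, ∃ a ∈ insert (k33Center f z (.inl x)) (k33Leaves f (.inl x)),
      ∃ b ∈ insert (k33Center f z (.inr w)) (k33Leaves f (.inr w)), G.Adj a b := by
    intro x w
    induction w using Fin.cases with
    | zero => exact ⟨f (.inl x), .inl rfl, z, .inl rfl, hz x⟩
    | succ y =>
      obtain ⟨m, hxm, hym⟩ :=
        exists_adj_adj_of_copy_exactSquare f (Sum.inl_ne_inr (a := x) (b := y))
      by_cases hm : ∀ y', G.Adj (f (.inr y')) m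
      · exact ⟨m, .inr ⟨hxm, hm⟩, f (.inr y), .inl rfl, hym.symm⟩
      · exact ⟨f (.inl x), .inl rfl, m, .inr ⟨hym, hm⟩, hxm⟩
  rcases i with x | w <;> rcases j with x' | w'
  · simp at hij
  · exact edge x w'
  · obtain ⟨a, ha, b, hb, hab⟩ := edge x' w
    exact ⟨b, hb, a, ha, hab.symm⟩
  · simp at hij

end K33

theorem hasMinor_completeBipartiteGraph_of_copy_exactSquare [Finite V]
    (hdeg : ∀ v, (G.neighborSet v).ncard ≤ 3)
    (f : Copy (completeGraph (Fin 3 ⊕ Fin 2)) (exactSquare G)) (z : V)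
    (hz : ∀ x, G.Adj (f (.inl x)) z) :
    HasMinor G (completeBipartiteGraph (Fin 3) (Fin 3)) :=
  hasMinor_of_stars (k33Center f z) (k33Leaves f) (fun _ _ => adj_k33Center_of_mem_k33Leaves)
    (injective_k33Center hz) (k33Center_notMem_k33Leaves hdeg hz)
    (pairwise_disjoint_k33Leaves hdeg) fun _ _ => exists_adj_of_completeBipartiteGraph_adj hz

end

/-- For any subcubic planar graph `G`, the clique number of the exact square of
`G` is at most `4`, i.e. the exact square has no clique on `5` vertices. -/
theorem exactSquare_cliqueFree_five {V : Type*} [Fintype V]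
    (G : SimpleGraph V) (hplanar : IsPlanar G)
    (hdeg : ∀ v : V, (G.neighborSet v).ncard ≤ 3) :
    (exactSquare G).CliqueFree 5 := by
  refine cliqueFree_iff.mpr ⟨fun f => ?_⟩
  by_cases h3 : ∀ t i j k, G.Adj (f i) t → G.Adj (f j) t → G.Adj (f k) t → i = j ∨ i = k ∨ j = k
  · exact hplanar.1 (hasMinor_completeGraph_of_copy_exactSquare f h3)
  push Not at h3
  obtain ⟨z, i, j, k, hi, hj, hk, hij, hik, hjk⟩ := h3
  classical
  obtain ⟨e, he⟩ := exists_sumEquiv_inl_mem (m := 3) (n := 2) (T := {i, j, k}) rfl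
    (Finset.card_eq_three.mpr ⟨i, j, k, hij, hik, hjk, rfl⟩).ge
  refine hplanar.2 (hasMinor_completeBipartiteGraph_of_copy_exactSquare hdeg
    (f.comp (Iso.completeGraph e).toCopy) z fun x => ?_)
  obtain rfl | rfl | rfl := by simpa using he x
  exacts [hi, hj, hk]
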